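/- Let Q ∈ GL_l(ℂ) be an antidiagonal matrix with Q_{r, l+1-r} = (-1)^{r-1} · C(r)^{-1} · q^{(r-1)i - 2·∑_{j=1}^{r-1} j}, where C(r) is the q-binomial coefficient [l-1 choose r-1] and i = l-1. Then Q_{r,l+1-r}/Q_{l+1-r,r} = (-q)^{l-2r+1} for each 1 ≤ r ≤ l, and hence Tr(Q(Q^{-1})ᵀ) = ∑_{r=1}^{l} (-q)^{l-2r+1}. -/
import Mathlib


/-- The quantum integer `[j] = (q^j - q^(-j))/(q - q⁻¹)`. -/
noncomputable def qInt (q : ℂ) (j : ℕ) : ℂ := (q ^ (j : ℤ) - q ^ (-(j : ℤ))) / (q - q⁻¹)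

/-- The quantum factorial `[m]! = ∏_{j=1}^m [j]`. -/
noncomputable def qFact (q : ℂ) (m : ℕ) : ℂ := ∏ j ∈ Finset.Icc 1 m, qInt q j

/-- The quantum binomial coefficient `[m choose k] = [m]!/([k]![m-k]!)`. -/
noncomputable def qBinom (q : ℂ) (m k : ℕ) : ℂ := qFact q m / (qFact q k * qFact q (m - k))

lemma two_mul_sum_Icc (r : ℕ) : (2:ℤ) * ∑ j ∈ Finset.Icc 1 r, (j:ℤ) = r * (r+1) := by
  induction r with
  | zero => simp
  | succ r ih =>
    rw [Finset.sum_Icc_succ_top (by omega)]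
    push_cast
    push_cast at ih
    linear_combination ih

lemma neg_one_zpow_congr (a b : ℤ) (h : (2:ℤ) ∣ (a - b)) : ((-1:ℂ))^a = (-1)^b := by
  obtain ⟨c, hc⟩ := h
  have ha : a = 2*c + b := by omega
  rw [ha, zpow_add₀ (by norm_num : (-1:ℂ) ≠ 0), zpow_mul]
  norm_num

lemma qInt_ne_zero (n : ℕ) (hn : Odd n) (q : ℂ) (hq : IsPrimitiveRoot q n)
    (j : ℕ) (h1 : 1 ≤ j) (h2 : j < n) : qInt q j ≠ 0 := by
  have hq0 : q ≠ 0 := hq.ne_zero (by omega)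
  have hden : q - q⁻¹ ≠ 0 := by
    intro h
    have hqq : q = q⁻¹ := sub_eq_zero.mp h
    have h2' : q ^ 2 = 1 := by
      rw [sq]; nth_rewrite 1 [hqq]; exact inv_mul_cancel₀ hq0
    have := Nat.le_of_dvd (by norm_num) ((hq.pow_eq_one_iff_dvd 2).mp h2')
    obtain ⟨k, hk⟩ := hn
    omega
  have hnum : q ^ (j:ℤ) - q ^ (-(j:ℤ)) ≠ 0 := by
    intro h
    have hz : q ^ (j:ℤ) = q ^ (-(j:ℤ)) := sub_eq_zero.mp h
    have h2j : q ^ (2*j) = 1 := by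
      have : q ^ ((2*j : ℕ) : ℤ) = 1 := by
        push_cast
        rw [two_mul, zpow_add₀ hq0]
        nth_rewrite 2 [hz]
        rw [← zpow_add₀ hq0]
        simp
      rwa [zpow_natCast] at this
    have hdvd : n ∣ 2*j := (hq.pow_eq_one_iff_dvd (2*j)).mp h2j
    have hcop : Nat.Coprime n 2 := Nat.coprime_two_right.mpr hn
    have := hcop.dvd_of_dvd_mul_left hdvd
    have := Nat.le_of_dvd (by omega) this
    omega
  exact div_ne_zero hnum hden

lemma qFact_ne_zero (n : ℕ) (hn : Odd n) (q : ℂ) (hq : IsPrimitiveRoot q n)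
    (m : ℕ) (hm : m < n) : qFact q m ≠ 0 := by
  rw [qFact, Finset.prod_ne_zero_iff]
  intro j hj
  rw [Finset.mem_Icc] at hj
  exact qInt_ne_zero n hn q hq j hj.1 (by omega)

lemma qBinom_ne_zero (n : ℕ) (hn : Odd n) (q : ℂ) (hq : IsPrimitiveRoot q n)
    (m k : ℕ) (hk : k ≤ m) (hm : m < n) : qBinom q m k ≠ 0 := by
  exact div_ne_zero (qFact_ne_zero n hn q hq m hm)
    (mul_ne_zero (qFact_ne_zero n hn q hq k (by omega))
      (qFact_ne_zero n hn q hq (m-k) (by omega)))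

lemma qBinom_symm (q : ℂ) (m k : ℕ) (hk : k ≤ m) :
    qBinom q m (m - k) = qBinom q m k := by
  rw [qBinom, qBinom, Nat.sub_sub_self hk, mul_comm]

open Matrix in
/-- Let `Q` be the antidiagonal matrix with `Q_{r, l+1-r} =
(-1)^(r-1) [l-1 choose r-1]⁻¹ q^((r-1)(l-1) - 2∑_{j=1}^{r-1} j)` (here written
with `0`-indexed rows and columns, so row `r` pairs with column `l-1-r`).
Then `Q_{r,l+1-r}/Q_{l+1-r,r} = (-q)^(l-2r+1)` and
`Tr(Q (Q⁻¹)ᵀ) = ∑_{r=1}^{l} (-q)^(l-2r+1)`. -/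
theorem stmt_17 (n : ℕ) (hn : Odd n) (q : ℂ) (hq : IsPrimitiveRoot q n)
    (l : ℕ) (hl : 1 ≤ l) (hl' : l ≤ n)
    (Q : Matrix (Fin l) (Fin l) ℂ)
    (hQ : ∀ r s : Fin l, Q r s =
      if (r : ℕ) + (s : ℕ) = l - 1 then
        (-1) ^ (r : ℕ) * (qBinom q (l - 1) (r : ℕ))⁻¹ *
          q ^ ((r : ℤ) * (l - 1) - 2 * ∑ j ∈ Finset.Icc 1 (r : ℕ), (j : ℤ))
      else 0) :
    (∀ r : Fin l, Q r r.rev / Q r.rev r = (-q) ^ ((l : ℤ) - 2 * ((r : ℕ) + 1) + 1)) ∧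
    (Q * Q⁻¹ᵀ).trace = ∑ r ∈ Finset.Icc 1 l, (-q) ^ ((l : ℤ) - 2 * r + 1) := by
  have hq0 : q ≠ 0 := hq.ne_zero (by have := hn.pos; omega)
  -- entry on the antidiagonal, in zpow form
  have hQd : ∀ a : Fin l, Q a a.rev =
      (-1:ℂ) ^ ((a:ℕ):ℤ) * (qBinom q (l - 1) (a:ℕ))⁻¹ *
        q ^ (((a:ℕ):ℤ) * (l - 1) - 2 * ∑ j ∈ Finset.Icc 1 (a:ℕ), (j : ℤ)) := by
    intro a
    rw [hQ, if_pos (by rw [Fin.val_rev]; omega), zpow_natCast]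
  have hB : ∀ a : Fin l, qBinom q (l - 1) (a:ℕ) ≠ 0 := fun a =>
    qBinom_ne_zero n hn q hq (l-1) a (by omega) (by omega)
  have hQad : ∀ a : Fin l, Q a a.rev ≠ 0 := by
    intro a
    rw [hQd a]
    exact mul_ne_zero (mul_ne_zero (zpow_ne_zero _ (by norm_num))
      (inv_ne_zero (hB a))) (zpow_ne_zero _ hq0)
  -- the key ratio computation
  have key : ∀ r : Fin l, Q r r.rev / Q r.rev r = (-q) ^ ((l : ℤ) - 2 * ((r : ℕ) + 1) + 1) := by
    intro a
    have hrev : Q a.rev a = Q a.rev a.rev.rev := by rw [Fin.rev_rev]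
    rw [hrev, hQd a, hQd a.rev]
    have hk' : ((a.rev : ℕ) : ℤ) = (l:ℤ) - 1 - (a:ℕ) := by
      have := Fin.val_rev a
      have := a.isLt
      omega
    have hBsymm : qBinom q (l - 1) (a.rev : ℕ) = qBinom q (l - 1) (a:ℕ) := by
      have h1 : (a.rev : ℕ) = (l-1) - (a:ℕ) := by
        have := Fin.val_rev a; have := a.isLt; omega
      rw [h1]
      exact qBinom_symm q (l-1) (a:ℕ) (by have := a.isLt; omega)
    rw [hBsymm]
    set k : ℕ := (a:ℕ) with hkdef
    set B : ℂ := (qBinom q (l - 1) k)⁻¹ with hBdef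
    have hBne : B ≠ 0 := inv_ne_zero (hB a)
    rw [div_eq_iff (mul_ne_zero (mul_ne_zero (zpow_ne_zero _ (by norm_num)) hBne)
      (zpow_ne_zero _ hq0))]
    have hnegq : (-q) = (-1) * q := by ring
    rw [hnegq, mul_zpow]
    have h1 := two_mul_sum_Icc k
    have h2 := two_mul_sum_Icc (a.rev : ℕ)
    have hexp : ((l : ℤ) - 2 * (k + 1) + 1) +
        (((a.rev:ℕ):ℤ) * (l - 1) - 2 * ∑ j ∈ Finset.Icc 1 (a.rev:ℕ), (j : ℤ))
        = (k:ℤ) * (l - 1) - 2 * ∑ j ∈ Finset.Icc 1 k, (j : ℤ) := by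
      rw [hk']
      rw [hk'] at h2
      have hkl : (k:ℤ) ≤ (l:ℤ) - 1 := by have := a.isLt; omega
      linear_combination h1 - h2
    have hsign : ((-1:ℂ)) ^ ((k:ℤ)) =
        (-1:ℂ) ^ ((l : ℤ) - 2 * (k + 1) + 1) * (-1:ℂ) ^ (((a.rev:ℕ)):ℤ) := by
      rw [← zpow_add₀ (by norm_num : (-1:ℂ) ≠ 0)]
      apply neg_one_zpow_congr
      rw [hk']
      omega
    calc (-1:ℂ) ^ ((k:ℤ)) * B * q ^ ((k:ℤ) * (l - 1) - 2 * ∑ j ∈ Finset.Icc 1 k, (j : ℤ))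
        = (-1:ℂ) ^ ((k:ℤ)) * B * q ^ (((l : ℤ) - 2 * (k + 1) + 1) +
            (((a.rev:ℕ):ℤ) * (l - 1) - 2 * ∑ j ∈ Finset.Icc 1 (a.rev:ℕ), (j : ℤ))) := by
          rw [hexp]
      _ = ((-1:ℂ) ^ ((l : ℤ) - 2 * (k + 1) + 1) * q ^ ((l : ℤ) - 2 * (k + 1) + 1)) *
            ((-1:ℂ) ^ (((a.rev:ℕ)):ℤ) * B *
              q ^ (((a.rev:ℕ):ℤ) * (l - 1) - 2 * ∑ j ∈ Finset.Icc 1 (a.rev:ℕ), (j : ℤ))) := by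
          rw [hsign, zpow_add₀ hq0]; ring
  refine ⟨key, ?_⟩
  -- the explicit inverse
  classical
  set R : Matrix (Fin l) (Fin l) ℂ :=
    fun s t => if (s:ℕ) + (t:ℕ) = l - 1 then (Q t s)⁻¹ else 0 with hRdef
  have hQoff : ∀ (a s : Fin l), s ≠ a.rev → Q a s = 0 := by
    intro a s hs
    rw [hQ, if_neg]
    intro h
    apply hs
    apply Fin.ext
    rw [Fin.val_rev]
    omega
  have hQR : Q * R = 1 := by
    ext a b
    rw [Matrix.mul_apply]
    rw [Finset.sum_eq_single a.rev (fun s _ hs => by rw [hQoff a s hs, zero_mul])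
      (fun h => absurd (Finset.mem_univ _) h)]
    show Q a a.rev * (if ((a.rev:ℕ)) + (b:ℕ) = l - 1 then (Q b a.rev)⁻¹ else 0) = _
    by_cases hb : b = a
    · subst hb
      rw [if_pos (by rw [Fin.val_rev]; omega), mul_inv_cancel₀ (hQad b), Matrix.one_apply_eq]
    · rw [if_neg, mul_zero, Matrix.one_apply_ne (Ne.symm hb)]
      intro h
      apply hb
      apply Fin.ext
      rw [Fin.val_rev] at h
      have := b.isLt
      omega
  have hQinv : Q⁻¹ = R := Matrix.inv_eq_right_inv hQR
  rw [hQinv, Matrix.trace]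
  have hdiag : ∀ a : Fin l, (Q * Rᵀ).diag a = (-q) ^ ((l : ℤ) - 2 * ((a : ℕ) + 1) + 1) := by
    intro a
    rw [Matrix.diag_apply, Matrix.mul_apply]
    rw [Finset.sum_eq_single a.rev (fun s _ hs => by rw [hQoff a s hs, zero_mul])
      (fun h => absurd (Finset.mem_univ _) h)]
    show Q a a.rev * (if (a:ℕ) + ((a.rev:ℕ)) = l - 1 then (Q a.rev a)⁻¹ else 0) = _
    rw [if_pos (by rw [Fin.val_rev]; omega)]
    rw [← div_eq_mul_inv]
    exact key a
  rw [Finset.sum_congr rfl (fun a _ => hdiag a)]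
  have : (Finset.Icc 1 l) = Finset.Ico 1 (l+1) := by
    rw [Finset.Ico_add_one_right_eq_Icc]
  rw [this, Finset.sum_Ico_eq_sum_range]
  simp only [Nat.add_sub_cancel]
  rw [Fin.sum_univ_eq_sum_range (fun i => (-q) ^ ((l : ℤ) - 2 * ((i:ℕ) + 1) + 1))]
  apply Finset.sum_congr rfl
  intro i _
  congr 1
  push_cast
  ring
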